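/- arXiv:2407.21294 — 2 statements merged into one kernel-verified Lean document; each statement's English description precedes it below -/
import Mathlib

section
/- Let x be a Nash equilibrium of the stable matching game. For a woman w, let N_w(x) = {k ∈ M : x_{kw} > 0} be the set of men who fractionally propose to her. Then no man m can simultaneously be the most preferred man (with respect to >_{w_1}) in N_{w_1}(x) and the most preferred man (with respect to >_{w_2}) in N_{w_2}(x) for two distinct women w_1 ≠ w_2 with m ∈ N_{w_1}(x) ∩ N_{w_2}(x). -/
open Finset Real MeasureTheory

namespace SM

variable {n : ℕ}

/-- The set of men that woman `w` strictly prefers to man `m`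
(`rankW w k` is woman `w`'s cardinal ranking score of man `k`;
`k >_w m` iff `rankW w m < rankW w k`). -/
noncomputable def better (rankW : Fin n → Fin n → ℝ) (w m : Fin n) : Finset (Fin n) :=
  Finset.univ.filter fun k => rankW w m < rankW w k

/-- Market assumptions: men's cardinal preferences lie in `(0,1]` with no ties, and each
woman's ranking of the men is strict (injective scores). -/
def MarketHyp (μp rankW : Fin n → Fin n → ℝ) : Prop :=
  (∀ m w, μp m w ∈ Set.Ioc (0:ℝ) 1) ∧
  (∀ m w w', w ≠ w' → μp m w ≠ μp m w') ∧
  (∀ w, Function.Injective (rankW w))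

/-- `v_{mw}(x) = μ_{mw} ∏_{k >_w m} (1 - x_{kw})`. -/
noncomputable def vv (μp rankW : Fin n → Fin n → ℝ) (x : Fin n → Fin n → ℝ) (m w : Fin n) : ℝ :=
  μp m w * ∏ k ∈ better rankW w m, (1 - x k w)

/-- Payoff `u_m(x) = ∑_w v_{mw}(x) x_{mw}` of man `m` in the stable matching game. -/
noncomputable def uu (μp rankW : Fin n → Fin n → ℝ) (x : Fin n → Fin n → ℝ) (m : Fin n) : ℝ :=
  ∑ w, vv μp rankW x m w * x m w

/-- Mixed strategy: a probability vector over the women. -/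
def IsStrategy (y : Fin n → ℝ) : Prop := (∀ w, 0 ≤ y w) ∧ ∑ w, y w = 1

/-- Pure strategy: the indicator vector of a single woman. -/
def IsPure (y : Fin n → ℝ) : Prop := ∃ w₀, y = fun w => if w = w₀ then (1:ℝ) else 0

/-- (Mixed) Nash equilibrium of the stable matching game. -/
def IsNE (μp rankW : Fin n → Fin n → ℝ) (x : Fin n → Fin n → ℝ) : Prop :=
  (∀ m, IsStrategy (x m)) ∧
  ∀ m y, IsStrategy y → uu μp rankW (Function.update x m y) m ≤ uu μp rankW x m

/-- Pure Nash equilibrium of the stable matching game. -/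
def IsPureNE (μp rankW : Fin n → Fin n → ℝ) (x : Fin n → Fin n → ℝ) : Prop :=
  (∀ m, IsPure (x m)) ∧
  ∀ m y, IsPure y → uu μp rankW (Function.update x m y) m ≤ uu μp rankW x m

/-- Characteristic vector of the perfect matching `σ`. -/
def charVec (σ : Equiv.Perm (Fin n)) : Fin n → Fin n → ℝ :=
  fun m w => if w = σ m then 1 else 0

/-- A perfect matching `σ` is stable iff it admits no blocking pair `(m, σ m')`. -/
def IsStableMatching (μp rankW : Fin n → Fin n → ℝ) (σ : Equiv.Perm (Fin n)) : Prop :=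
  ¬ ∃ m m' : Fin n, m ≠ m' ∧ μp m (σ m) < μp m (σ m') ∧ rankW (σ m') m' < rankW (σ m') m

/-- `Δ = min_{m, w ≠ w'} |μ_{mw} - μ_{mw'}|`. -/
noncomputable def gapDelta (μp : Fin n → Fin n → ℝ) : ℝ :=
  sInf {d : ℝ | ∃ m w w' : Fin n, w ≠ w' ∧ d = |μp m w - μp m w'|}

/-- `μ_min = min_{m,w} μ_{mw}`. -/
noncomputable def muMin (μp : Fin n → Fin n → ℝ) : ℝ :=
  sInf {a : ℝ | ∃ m w : Fin n, a = μp m w}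

/-- `μ_max = max_{m,w} μ_{mw}`. -/
noncomputable def muMax (μp : Fin n → Fin n → ℝ) : ℝ :=
  sSup {a : ℝ | ∃ m w : Fin n, a = μp m w}

/-- Entrywise ℓ¹ distance on strategy profiles. -/
noncomputable def l1dist (x y : Fin n → Fin n → ℝ) : ℝ :=
  ∑ m, ∑ w, |x m w - y m w|

/-- The logit (exponential-weights) map. -/
noncomputable def logit (η : ℝ) (L : Fin n → ℝ) (w : Fin n) : ℝ :=
  Real.exp (η * L w) / ∑ w', Real.exp (η * L w')

/-! A man's payoff is linear in his own strategy with coefficients `v_{mw}`, which he does not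
influence, so at an equilibrium every woman in his support has maximal `v_{mw}`. If `m` is the top proposer of `w`,
no man she prefers proposes to her and `v_{mw} = μ_{mw}`. Being the top proposer of both `w₁` and
`w₂` would thus force `μ_{mw₁} = μ_{mw₂}`, which the absence of ties excludes. -/

lemma IsStrategy.le_of_pos_of_isMaxOn {v x : Fin n → ℝ} (hx : IsStrategy x)
    (hmax : IsMaxOn (fun y => ∑ w, v w * y w) {y | IsStrategy y} x)
    {w₁ : Fin n} (h₁ : 0 < x w₁) (w₂ : Fin n) : v w₂ ≤ v w₁ := by
  rcases eq_or_ne w₁ w₂ with rfl | hne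
  · rfl
  -- move all of the mass on `w₁` to `w₂`
  set y : Fin n → ℝ := fun w => x w + (if w = w₂ then x w₁ else 0) - (if w = w₁ then x w₁ else 0)
  have hsum : ∀ u : Fin n → ℝ, ∑ w, u w * y w = ∑ w, u w * x w + u w₂ * x w₁ - u w₁ * x w₁ := by
    intro u
    simp only [y, mul_sub, mul_add, mul_ite, mul_zero, Finset.sum_sub_distrib,
      Finset.sum_add_distrib, Finset.sum_ite_eq', Finset.mem_univ, if_true]
  have hy : IsStrategy y := by
    refine ⟨fun w => ?_, by simpa [hx.2] using hsum 1⟩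
    by_cases hw₁ : w = w₁
    · subst hw₁; simp [y, hne]
    · have := hx.1 w; simp only [y, hw₁, if_false]; split_ifs <;> linarith
  nlinarith [isMaxOn_iff.mp hmax y hy, hsum v]

lemma vv_update_self (μp rankW : Fin n → Fin n → ℝ) (x : Fin n → Fin n → ℝ) (m : Fin n)
    (y : Fin n → ℝ) (w : Fin n) :
    vv μp rankW (Function.update x m y) m w = vv μp rankW x m w := by
  refine congrArg (μp m w * ·) (Finset.prod_congr rfl fun k hk => ?_)
  have hkm : k ≠ m := by
    rintro rfl
    exact lt_irrefl _ (Finset.mem_filter.mp hk).2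
  rw [Function.update_of_ne hkm]

lemma uu_update_self (μp rankW : Fin n → Fin n → ℝ) (x : Fin n → Fin n → ℝ) (m : Fin n)
    (y : Fin n → ℝ) :
    uu μp rankW (Function.update x m y) m = ∑ w, vv μp rankW x m w * y w := by
  simp only [uu, vv_update_self, Function.update_self]

lemma IsNE.vv_le_of_pos {μp rankW : Fin n → Fin n → ℝ} {x : Fin n → Fin n → ℝ}
    (hNE : IsNE μp rankW x) {m w₁ : Fin n} (h₁ : 0 < x m w₁) (w₂ : Fin n) :
    vv μp rankW x m w₂ ≤ vv μp rankW x m w₁ :=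
  (hNE.1 m).le_of_pos_of_isMaxOn
    (isMaxOn_iff.mpr fun y hy => uu_update_self μp rankW x m y ▸ hNE.2 m y hy) h₁ w₂

lemma vv_eq_of_forall_rank_le {μp rankW : Fin n → Fin n → ℝ} {x : Fin n → Fin n → ℝ}
    (hx : ∀ k w, 0 ≤ x k w) {m w : Fin n} (htop : ∀ k, 0 < x k w → rankW w k ≤ rankW w m) :
    vv μp rankW x m w = μp m w := by
  refine (congrArg (μp m w * ·) (Finset.prod_eq_one fun k hk => ?_)).trans (mul_one _)
  have hxk : 0 = x k w :=
    (hx k w).eq_or_lt.resolve_right fun hpos => (htop k hpos).not_gt (Finset.mem_filter.mp hk).2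
  rw [← hxk, sub_zero]

/-- at a Nash equilibrium, no man can be the most preferred man of two distinct
women among the men fractionally proposing to them. -/
theorem NE_no_double_top {n : ℕ} (μp rankW : Fin n → Fin n → ℝ)
    (hM : MarketHyp μp rankW)
    (x : Fin n → Fin n → ℝ) (hNE : IsNE μp rankW x)
    (m : Fin n) (w₁ w₂ : Fin n) (hne : w₁ ≠ w₂)
    (h1 : 0 < x m w₁) (h2 : 0 < x m w₂)
    (htop1 : ∀ k, 0 < x k w₁ → rankW w₁ k ≤ rankW w₁ m)
    (htop2 : ∀ k, 0 < x k w₂ → rankW w₂ k ≤ rankW w₂ m) :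
    False := by
  have hx : ∀ k w, 0 ≤ x k w := fun k => (hNE.1 k).1
  have hv₁ : vv μp rankW x m w₁ = μp m w₁ := vv_eq_of_forall_rank_le hx htop1
  have hv₂ : vv μp rankW x m w₂ = μp m w₂ := vv_eq_of_forall_rank_le hx htop2
  have h₂₁ := hNE.vv_le_of_pos h1 w₂
  have h₁₂ := hNE.vv_le_of_pos h2 w₁
  rw [hv₁, hv₂] at h₂₁ h₁₂
  exact hM.2.1 m w₁ w₂ hne (le_antisymm h₁₂ h₂₁)

end SM
end

section
/- Consider the stable matching game (with known preferences) started from a good initial pure strategy profile x^0. Consider any sequence of updates in which at each step an arbitrary subset of players that includes at least one player not currently playing a best response updates their actions by playing pure best responses. Then the sequence of updates reaches a pure Nash equilibrium in no more than |M|·|W| iterations. -/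
open Finset Real MeasureTheory

namespace SM

variable {n : ℕ}

/-- The strategy profile of indicator vectors associated with the action profile `a`
(man `m` proposes to woman `a m`). -/
def pureProfile (a : Fin n → Fin n) : Fin n → Fin n → ℝ := fun m w => if w = a m then 1 else 0

/-- Payoff of man `m` at the pure action profile `a`. -/
noncomputable def uP (μp rankW : Fin n → Fin n → ℝ) (a : Fin n → Fin n) (m : Fin n) : ℝ :=
  uu μp rankW (pureProfile a) m

/-- Man `m` is playing a (pure) best response at the action profile `a`. -/
def IsBR (μp rankW : Fin n → Fin n → ℝ) (a : Fin n → Fin n) (m : Fin n) : Prop :=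
  ∀ w : Fin n, uP μp rankW (Function.update a m w) m ≤ uP μp rankW a m

/-- Pure Nash equilibrium of the pure-action stable matching game. -/
def IsPureNEAction (μp rankW : Fin n → Fin n → ℝ) (a : Fin n → Fin n) : Prop :=
  ∀ m, IsBR μp rankW a m

/-- Man `m` is matched at `a`: no man more preferred by woman `a m` also proposes to her. -/
def MatchedIn (rankW : Fin n → Fin n → ℝ) (a : Fin n → Fin n) (m : Fin n) : Prop :=
  ∀ k ∈ better rankW (a m) m, a k ≠ a m

/-- Good state: every matched man is at his best response. -/
def GoodState (μp rankW : Fin n → Fin n → ℝ) (a : Fin n → Fin n) : Prop :=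
  ∀ m, MatchedIn rankW a m → IsBR μp rankW a m

/-! In a good state a matched man already plays his unique best response, so he never moves.
Hence every woman's best proposer can only improve, which keeps the state good. A man who
strictly improves moves to a woman who prefers him to all her current proposers, so the potential
`∑_w #{men ranked by w no higher than one of her proposers}`, which is at most `|M||W|`, strictly
increases at every step. -/

lemma exists_le_sub_of_bounded_potential {P Q : ℕ → Prop} (f : ℕ → ℕ) {N : ℕ} (hf : ∀ t, f t ≤ N)
    (hQ : Q 0) (hstep : ∀ t, Q t → ¬ P t → Q (t + 1) ∧ f t < f (t + 1)) :
    ∃ t ≤ N - f 0, P t := by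
  by_contra! hP
  have hgrow : ∀ t ≤ N - f 0 + 1, Q t ∧ f 0 + t ≤ f t := by
    intro t ht
    induction t with
    | zero => exact ⟨hQ, le_rfl⟩
    | succ t ih =>
      obtain ⟨hQt, hft⟩ := ih (by omega)
      obtain ⟨hQt', hlt⟩ := hstep t hQt (hP t (by omega))
      exact ⟨hQt', by omega⟩
  have hlast := (hgrow _ le_rfl).2
  have hbound := hf (N - f 0 + 1)
  have hbound₀ := hf 0
  omega

def Available (rankW : Fin n → Fin n → ℝ) (a : Fin n → Fin n) (w m : Fin n) : Prop :=
  ∀ k ∈ better rankW w m, a k ≠ w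

noncomputable instance (rankW : Fin n → Fin n → ℝ) (a : Fin n → Fin n) (w m : Fin n) :
    Decidable (Available rankW a w m) :=
  inferInstanceAs (Decidable (∀ k ∈ better rankW w m, a k ≠ w))

def IsBestResponse (μp rankW : Fin n → Fin n → ℝ) (a : Fin n → Fin n) (m w : Fin n) : Prop :=
  ∀ w', uP μp rankW (Function.update a m w') m ≤ uP μp rankW (Function.update a m w) m

def IsBestResponseStep (μp rankW : Fin n → Fin n → ℝ) (b b' : Fin n → Fin n) : Prop :=
  ∀ m, b' m = b m ∨ IsBestResponse μp rankW b m (b' m)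

section Payoff

variable {μp rankW : Fin n → Fin n → ℝ}

lemma notMem_better_self (rankW : Fin n → Fin n → ℝ) (w m : Fin n) : m ∉ better rankW w m := by
  simp [better]

lemma available_update_iff (a : Fin n → Fin n) (m w w' : Fin n) :
    Available rankW (Function.update a m w') w m ↔ Available rankW a w m := by
  refine forall₂_congr fun k hk => ?_
  have hkm : k ≠ m := fun h => notMem_better_self rankW w m (h ▸ hk)
  rw [Function.update_of_ne hkm]

lemma uP_eq_ite (a : Fin n → Fin n) (m : Fin n) :
    uP μp rankW a m = if Available rankW a (a m) m then μp m (a m) else 0 := by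
  rw [uP, uu, sum_eq_single (a m) (fun w _ hw => by simp [pureProfile, hw]) (by simp)]
  simp only [vv, pureProfile, if_true, mul_one]
  split_ifs with h
  · rw [prod_eq_one fun k hk => by simp [Ne.symm (h k hk)], mul_one]
  · obtain ⟨k, hk, hak⟩ := not_forall₂.mp h
    exact mul_eq_zero_of_right _ (prod_eq_zero hk (by simp [not_not.mp hak]))

lemma uP_update_eq_ite (a : Fin n → Fin n) (m w : Fin n) :
    uP μp rankW (Function.update a m w) m = if Available rankW a w m then μp m w else 0 := by
  simp only [uP_eq_ite, Function.update_self, available_update_iff]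

lemma uP_eq_of_matchedIn {a : Fin n → Fin n} {m : Fin n} (hm : MatchedIn rankW a m) :
    uP μp rankW a m = μp m (a m) := by
  rw [uP_eq_ite, if_pos (show Available rankW a (a m) m from hm)]

lemma uP_update_le (hpos : ∀ m w, 0 < μp m w) (a : Fin n → Fin n) (m w : Fin n) :
    uP μp rankW (Function.update a m w) m ≤ μp m w := by
  rw [uP_update_eq_ite]
  split_ifs
  exacts [le_rfl, (hpos m w).le]

lemma uP_nonneg (hpos : ∀ m w, 0 < μp m w) (a : Fin n → Fin n) (m : Fin n) :
    0 ≤ uP μp rankW a m := by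
  rw [uP_eq_ite]
  split_ifs
  exacts [(hpos m (a m)).le, le_rfl]

lemma isBR_iff_isBestResponse (a : Fin n → Fin n) (m : Fin n) :
    IsBR μp rankW a m ↔ IsBestResponse μp rankW a m (a m) := by
  simp only [IsBR, IsBestResponse, Function.update_eq_self]

end Payoff

section Step

variable {μp rankW : Fin n → Fin n → ℝ} {b b' : Fin n → Fin n}

/-- A proposer whom `w` ranks highest among her proposers is matched. -/
lemma exists_matchedIn_proposer_ge {j w : Fin n} (hj : b j = w) :
    ∃ j', b j' = w ∧ rankW w j ≤ rankW w j' ∧ MatchedIn rankW b j' := by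
  obtain ⟨j', hj'mem, hj'max⟩ :=
    exists_max_image (univ.filter fun k => b k = w) (rankW w) ⟨j, by simp [hj]⟩
  have hbj' : b j' = w := (mem_filter.mp hj'mem).2
  refine ⟨j', hbj', hj'max j (by simp [hj]), fun k hk hbk => ?_⟩
  rw [hbj'] at hk hbk
  exact (hj'max k (by simp [hbk])).not_gt (mem_filter.mp hk).2

/-- Without ties, the current partner of a matched man is his unique best response. -/
lemma eq_of_matchedIn_of_step (hpos : ∀ m w, 0 < μp m w)
    (hμ : ∀ m, Function.Injective (μp m)) (hgood : GoodState μp rankW b)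
    (hstep : IsBestResponseStep μp rankW b b') {m : Fin n} (hm : MatchedIn rankW b m) :
    b' m = b m := by
  refine (hstep m).elim id fun hbr => ?_
  have heq : uP μp rankW (Function.update b m (b' m)) m = μp m (b m) := by
    rw [← uP_eq_of_matchedIn (μp := μp) hm]
    refine le_antisymm (hgood m hm _) ?_
    simpa using hbr (b m)
  rw [uP_update_eq_ite] at heq
  split_ifs at heq
  · exact hμ m heq
  · exact absurd heq.symm (hpos m (b m)).ne'

lemma exists_proposer_ge_of_step (hpos : ∀ m w, 0 < μp m w)
    (hμ : ∀ m, Function.Injective (μp m)) (hgood : GoodState μp rankW b)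
    (hstep : IsBestResponseStep μp rankW b b') {j w : Fin n} (hj : b j = w) :
    ∃ j', b' j' = w ∧ rankW w j ≤ rankW w j' := by
  obtain ⟨j', hbj', hle, hmatched⟩ := exists_matchedIn_proposer_ge hj
  exact ⟨j', (eq_of_matchedIn_of_step hpos hμ hgood hstep hmatched).trans hbj', hle⟩

lemma available_of_step (hpos : ∀ m w, 0 < μp m w)
    (hμ : ∀ m, Function.Injective (μp m)) (hgood : GoodState μp rankW b)
    (hstep : IsBestResponseStep μp rankW b b') {w m : Fin n} (h : Available rankW b' w m) :
    Available rankW b w m := by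
  intro k hk hbk
  obtain ⟨j', hbj', hle⟩ := exists_proposer_ge_of_step hpos hμ hgood hstep hbk
  exact h j' (mem_filter.mpr ⟨mem_univ _, (mem_filter.mp hk).2.trans_le hle⟩) hbj'

lemma uP_update_le_of_step (hpos : ∀ m w, 0 < μp m w)
    (hμ : ∀ m, Function.Injective (μp m)) (hgood : GoodState μp rankW b)
    (hstep : IsBestResponseStep μp rankW b b') (m w : Fin n) :
    uP μp rankW (Function.update b' m w) m ≤ uP μp rankW (Function.update b m w) m := by
  rw [uP_update_eq_ite, uP_update_eq_ite]
  split_ifs with h' h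
  · exact le_rfl
  · exact absurd (available_of_step hpos hμ hgood hstep h') h
  · exact (hpos m w).le
  · exact le_rfl

lemma isBestResponse_of_matchedIn_step (hpos : ∀ m w, 0 < μp m w)
    (hμ : ∀ m, Function.Injective (μp m)) (hgood : GoodState μp rankW b)
    (hstep : IsBestResponseStep μp rankW b b') {m : Fin n} (hm : MatchedIn rankW b' m) :
    IsBestResponse μp rankW b m (b' m) := by
  refine (hstep m).elim (fun hstay => ?_) id
  have hmb : MatchedIn rankW b m := by
    rw [MatchedIn, ← hstay]
    exact available_of_step hpos hμ hgood hstep hm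
  rw [hstay, ← isBR_iff_isBestResponse]
  exact hgood m hmb

lemma goodState_of_step (hpos : ∀ m w, 0 < μp m w)
    (hμ : ∀ m, Function.Injective (μp m)) (hgood : GoodState μp rankW b)
    (hstep : IsBestResponseStep μp rankW b b') : GoodState μp rankW b' := fun m hm w =>
  calc uP μp rankW (Function.update b' m w) m
      ≤ uP μp rankW (Function.update b m w) m := uP_update_le_of_step hpos hμ hgood hstep m w
    _ ≤ uP μp rankW (Function.update b m (b' m)) m :=
      isBestResponse_of_matchedIn_step hpos hμ hgood hstep hm w
    _ ≤ μp m (b' m) := uP_update_le hpos b m (b' m)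
    _ = uP μp rankW b' m := (uP_eq_of_matchedIn hm).symm

end Step

section Potential

variable {μp rankW : Fin n → Fin n → ℝ} {b b' : Fin n → Fin n}

noncomputable def proposerDownset (rankW : Fin n → Fin n → ℝ) (a : Fin n → Fin n) (w : Fin n) :
    Finset (Fin n) :=
  univ.filter fun k => ∃ j, a j = w ∧ rankW w k ≤ rankW w j

noncomputable def potential (rankW : Fin n → Fin n → ℝ) (a : Fin n → Fin n) : ℕ :=
  ∑ w, (proposerDownset rankW a w).card

lemma potential_le (rankW : Fin n → Fin n → ℝ) (a : Fin n → Fin n) :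
    potential rankW a ≤ n * n :=
  calc potential rankW a ≤ ∑ _w : Fin n, n :=
        sum_le_sum fun w _ => (card_le_univ _).trans_eq (Fintype.card_fin n)
    _ = n * n := by simp

lemma mem_proposerDownset_self (a : Fin n → Fin n) (m : Fin n) :
    m ∈ proposerDownset rankW a (a m) :=
  mem_filter.mpr ⟨mem_univ _, m, rfl, le_rfl⟩

lemma notMem_proposerDownset_of_available (hrank : ∀ w, Function.Injective (rankW w))
    {a : Fin n → Fin n} {w m : Fin n} (h : Available rankW a w m) (hne : a m ≠ w) :
    m ∉ proposerDownset rankW a w := by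
  intro hm
  obtain ⟨-, j, haj, hle⟩ := mem_filter.mp hm
  have hlt : rankW w m < rankW w j :=
    hle.lt_of_ne fun heq => hne (hrank w heq ▸ haj)
  exact h j (mem_filter.mpr ⟨mem_univ _, hlt⟩) haj

lemma proposerDownset_subset_of_step (hpos : ∀ m w, 0 < μp m w)
    (hμ : ∀ m, Function.Injective (μp m)) (hgood : GoodState μp rankW b)
    (hstep : IsBestResponseStep μp rankW b b') (w : Fin n) :
    proposerDownset rankW b w ⊆ proposerDownset rankW b' w := by
  intro k hk
  obtain ⟨-, j, hbj, hle⟩ := mem_filter.mp hk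
  obtain ⟨j', hbj', hle'⟩ := exists_proposer_ge_of_step hpos hμ hgood hstep hbj
  exact mem_filter.mpr ⟨mem_univ _, j', hbj', hle.trans hle'⟩

/-- A man who strictly improves moves to a woman who is available to him and enters her
downset. -/
lemma potential_lt_of_step (hpos : ∀ m w, 0 < μp m w)
    (hμ : ∀ m, Function.Injective (μp m)) (hrank : ∀ w, Function.Injective (rankW w))
    (hgood : GoodState μp rankW b) (hstep : IsBestResponseStep μp rankW b b') {m₀ : Fin n}
    (hm₀ : ¬ IsBR μp rankW b m₀) (hbr : IsBestResponse μp rankW b m₀ (b' m₀)) :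
    potential rankW b < potential rankW b' := by
  have hgain : uP μp rankW b m₀ < uP μp rankW (Function.update b m₀ (b' m₀)) m₀ := by
    obtain ⟨w, hw⟩ := not_forall.mp hm₀
    exact (not_le.mp hw).trans_le (hbr w)
  have havail : Available rankW b (b' m₀) m₀ := by
    by_contra h
    rw [uP_update_eq_ite, if_neg h] at hgain
    exact hgain.not_ge (uP_nonneg hpos b m₀)
  have hmoved : b m₀ ≠ b' m₀ := fun h => by
    rw [← h, Function.update_eq_self] at hgain
    exact hgain.false
  refine sum_lt_sum (fun w _ => card_le_card
    (proposerDownset_subset_of_step hpos hμ hgood hstep w)) ⟨b' m₀, mem_univ _, ?_⟩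
  exact card_lt_card <| (ssubset_iff_of_subset
    (proposerDownset_subset_of_step hpos hμ hgood hstep _)).mpr
    ⟨m₀, mem_proposerDownset_self b' m₀, notMem_proposerDownset_of_available hrank havail hmoved⟩

end Potential

/-- Lemma 7: starting from a good state, any sequence of updates in which,
at each step, a subset of players containing at least one player not at his best response
switches to best responses, reaches a pure Nash equilibrium within `|M||W|` iterations. -/
theorem good_state_best_response_convergence {n : ℕ} (μp rankW : Fin n → Fin n → ℝ)
    (hM : MarketHyp μp rankW)
    (a : ℕ → Fin n → Fin n) (hgood : GoodState μp rankW (a 0))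
    (hupd : ∀ t : ℕ, ¬ IsPureNEAction μp rankW (a t) →
      ∃ Pl : Finset (Fin n),
        (∃ m ∈ Pl, ¬ IsBR μp rankW (a t) m) ∧
        (∀ m ∉ Pl, a (t+1) m = a t m) ∧
        (∀ m ∈ Pl, ∀ w : Fin n,
          uP μp rankW (Function.update (a t) m w) m
            ≤ uP μp rankW (Function.update (a t) m (a (t+1) m)) m)) :
    ∃ t : ℕ, t ≤ n * n ∧ IsPureNEAction μp rankW (a t) := by
  obtain ⟨hμIoc, hμne, hrank⟩ := hM
  have hpos : ∀ m w, 0 < μp m w := fun m w => (hμIoc m w).1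
  have hμ : ∀ m, Function.Injective (μp m) := fun m w w' => not_imp_not.mp (hμne m w w')
  obtain ⟨t, ht, hNE⟩ := exists_le_sub_of_bounded_potential (fun t => potential rankW (a t))
    (fun t => potential_le rankW (a t)) (Q := fun t => GoodState μp rankW (a t))
    (P := fun t => IsPureNEAction μp rankW (a t)) hgood fun t hgoodt hNE => by
      obtain ⟨Pl, ⟨m₀, hm₀Pl, hm₀⟩, hstay, hbr⟩ := hupd t hNE
      have hstep : IsBestResponseStep μp rankW (a t) (a (t + 1)) := fun m =>
        (em (m ∈ Pl)).elim (fun hm => Or.inr (hbr m hm)) (fun hm => Or.inl (hstay m hm))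
      exact ⟨goodState_of_step hpos hμ hgoodt hstep,
        potential_lt_of_step hpos hμ hrank hgoodt hstep hm₀ (hbr m₀ hm₀Pl)⟩
  exact ⟨t, ht.trans (Nat.sub_le _ _), hNE⟩

end SM
end
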